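/- Let C be a field of characteristic zero and p ∈ C[t,x] a nonzero polynomial. Suppose that for every irreducible factor q of p there exist integers m ∈ ℤ and n > 0 such that σ_t^n σ_x^m(q) divides p. Then p is integer-linear, i.e., every irreducible factor of p has the form h(at + bx) for some univariate polynomial h ∈ C[z] and integers a, b. -/

import Mathlib

open MvPolynomial

/-- The shift automorphism of `K[t,x]` sending `t ↦ t + a`, `x ↦ x + b`
(variable `0` is `t`, variable `1` is `x`). -/
noncomputable def shift2 (K : Type*) [Field K] [CharZero K] (a b : ℤ) :
    MvPolynomial (Fin 2) K →ₐ[K] MvPolynomial (Fin 2) K :=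
  aeval (fun i => X i + MvPolynomial.C (if i = 0 then (a : K) else (b : K)))

/-- A polynomial in `K[t,x]` is integer-linear if every irreducible factor has the
form `h(mt + nx)` with `h ∈ K[z]` and `m, n ∈ ℤ`. -/
def IsIntegerLinear {K : Type*} [Field K] [CharZero K] (p : MvPolynomial (Fin 2) K) : Prop :=
  ∀ q : MvPolynomial (Fin 2) K, Irreducible q → q ∣ p →
    ∃ (h : Polynomial K) (m n : ℤ),
      q = Polynomial.aeval ((m : K) • (X 0 : MvPolynomial (Fin 2) K) + (n : K) • X 1) h

/-!
An irreducible factor `q` of `p` has only finitely many associates among the factors of `p`,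
so following the hypothesis along the orbit of `q` yields `σ_t^N σ_x^M q ~ q` with `N > 0`.
After the linear change of variables `x ↦ (M t - x) / N` this becomes `σ_t^N q' ~ q'`; viewing
`q'` in `K[x][t]`, the unit is `1` (compare leading coefficients) and a polynomial in `t` with
period `N ≠ 0` is constant in characteristic zero. Hence `q' ∈ K[x]`, i.e. `q = h(M t - N x)`.
-/

namespace Polynomial

variable {R : Type*} [CommRing R] [IsDomain R]

theorem taylor_eq_self_of_associated {p : R[X]} {r : R} (h : Associated (taylor r p) p) :
    taylor r p = p := by
  obtain ⟨u, hu⟩ := h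
  obtain ⟨a, -, ha⟩ := Polynomial.isUnit_iff.1 u.isUnit
  rcases eq_or_ne p 0 with rfl | hp
  · exact map_zero _
  have : p.leadingCoeff * a = p.leadingCoeff := by
    simpa [← ha, leadingCoeff_taylor] using congrArg leadingCoeff hu
  rw [mul_eq_left₀ (leadingCoeff_ne_zero.2 hp)] at this
  simpa [← ha, this] using hu

theorem eq_C_of_taylor_eq_self [CharZero R] {p : R[X]} {r : R} (hr : r ≠ 0)
    (h : taylor r p = p) : p = C (p.eval 0) := by
  have periodic : ∀ n : ℕ, p.eval (n * r) = p.eval 0 := by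
    intro n
    induction n with
    | zero => simp
    | succ n ih => rw [Nat.cast_succ, add_one_mul, ← taylor_eval, h, ih]
  rw [← sub_eq_zero]
  refine eq_zero_of_infinite_isRoot _ (Set.infinite_of_injective_forall_mem
    (f := fun n : ℕ => (n * r : R)) (fun m n hmn => ?_) fun n => ?_)
  · exact Nat.cast_injective (mul_right_cancel₀ hr hmn)
  · simp [periodic]

theorem eq_C_of_associated_taylor [CharZero R] {p : R[X]} {r : R} (hr : r ≠ 0)
    (h : Associated (taylor r p) p) : p = C (p.eval 0) :=
  eq_C_of_taylor_eq_self hr (taylor_eq_self_of_associated h)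

end Polynomial

theorem exists_lt_associated_of_forall_dvd {α : Type*} [CommMonoidWithZero α]
    [UniqueFactorizationMonoid α] {p : α} (hp : p ≠ 0) {r : ℕ → α}
    (hr : ∀ k, Irreducible (r k)) (hdvd : ∀ k, r k ∣ p) :
    ∃ i j, i < j ∧ Associated (r i) (r j) := by
  choose f hf hassoc using fun k =>
    UniqueFactorizationMonoid.exists_mem_factors_of_dvd hp (hr k) (hdvd k)
  obtain ⟨i, j, hij, hfij⟩ := Set.Finite.exists_lt_map_eq_of_forall_mem (t := {x | x ∈ _})
    hf (UniqueFactorizationMonoid.factors p).finite_toSet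
  exact ⟨i, j, hij, (hassoc i).trans (hfij ▸ (hassoc j).symm)⟩

theorem finSuccEquiv_X_one {R : Type*} [CommSemiring R] :
    finSuccEquiv R 1 (X 1) = Polynomial.C (X 0) :=
  finSuccEquiv_X_succ (j := 0)

section Shift

variable {K : Type*} [Field K] [CharZero K]

theorem shift2_shift2 (a b a' b' : ℤ) (f : MvPolynomial (Fin 2) K) :
    shift2 K a b (shift2 K a' b' f) = shift2 K (a + a') (b + b') f := by
  rw [← AlgHom.comp_apply]
  congr 1
  refine algHom_ext fun i => ?_
  fin_cases i <;> simp [shift2] <;> ring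

@[simp]
theorem shift2_zero_zero (f : MvPolynomial (Fin 2) K) : shift2 K 0 0 f = f := by
  rw [← AlgHom.id_apply (R := K) f]
  congr 1
  refine algHom_ext fun i => ?_
  fin_cases i <;> simp [shift2]

theorem shift2_neg_shift2 (a b : ℤ) (f : MvPolynomial (Fin 2) K) :
    shift2 K (-a) (-b) (shift2 K a b f) = f := by
  rw [shift2_shift2, neg_add_cancel, neg_add_cancel, shift2_zero_zero]

theorem irreducible_shift2 {q : MvPolynomial (Fin 2) K} (hq : Irreducible q) (a b : ℤ) :
    Irreducible (shift2 K a b q) :=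
  hq.map (AlgEquiv.ofAlgHom (shift2 K a b) (shift2 K (-a) (-b))
    (AlgHom.ext fun f => by simpa using shift2_neg_shift2 (-a) (-b) f)
    (AlgHom.ext (shift2_neg_shift2 a b)))

theorem exists_associated_shift2_self {p q : MvPolynomial (Fin 2) K} (hp : p ≠ 0)
    (hq : Irreducible q) (hqp : q ∣ p)
    (H : ∀ r : MvPolynomial (Fin 2) K, Irreducible r → r ∣ p →
      ∃ m n : ℤ, 0 < n ∧ shift2 K n m r ∣ p) :
    ∃ N M : ℤ, 0 < N ∧ Associated (shift2 K N M q) q := by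
  let S : Set (ℤ × ℤ) := {z | shift2 K z.1 z.2 q ∣ p}
  have step (z : S) : ∃ z' : S, z.1.1 < z'.1.1 := by
    obtain ⟨m, n, hn, hdvd⟩ := H _ (irreducible_shift2 hq _ _) z.2
    rw [shift2_shift2] at hdvd
    exact ⟨⟨(n + z.1.1, m + z.1.2), hdvd⟩, lt_add_of_pos_left _ hn⟩
  choose next hnext using step
  let orbit (k : ℕ) : S := next^[k] ⟨(0, 0), by simpa [S] using hqp⟩
  have horbit : StrictMono fun k => (orbit k).1.1 := strictMono_nat_of_lt_succ fun k => by
    simp only [orbit, Function.iterate_succ_apply']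
    exact hnext _
  obtain ⟨i, j, hij, hassoc⟩ := exists_lt_associated_of_forall_dvd hp
    (fun k => irreducible_shift2 hq _ _) (fun k => (orbit k).2)
  refine ⟨(orbit j).1.1 - (orbit i).1.1, (orbit j).1.2 - (orbit i).1.2,
    sub_pos.2 (horbit hij), ?_⟩
  have := hassoc.symm.map (shift2 K (-(orbit i).1.1) (-(orbit i).1.2))
  rwa [shift2_neg_shift2, shift2_shift2, neg_add_eq_sub, neg_add_eq_sub] at this

theorem finSuccEquiv_shift2 (a : ℤ) (f : MvPolynomial (Fin 2) K) :
    finSuccEquiv K 1 (shift2 K a 0 f) = Polynomial.taylor (C (a : K)) (finSuccEquiv K 1 f) := by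
  have : (finSuccEquiv K 1).toAlgHom.comp (shift2 K a 0) =
      ((Polynomial.taylorAlgHom (C (a : K) : MvPolynomial (Fin 1) K)).restrictScalars K).comp
        (finSuccEquiv K 1).toAlgHom := by
    refine algHom_ext fun i => ?_
    fin_cases i
    · simp [shift2, finSuccEquiv_X_zero, Polynomial.taylor_X]
    · simp [shift2, finSuccEquiv_X_one]
  simpa using DFunLike.congr_fun this f

theorem exists_eq_aeval_X_one_of_associated_shift2 {q : MvPolynomial (Fin 2) K} {N : ℤ}
    (hN : N ≠ 0) (h : Associated (shift2 K N 0 q) q) :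
    ∃ g : Polynomial K, q = Polynomial.aeval (X 1) g := by
  have hconst := Polynomial.eq_C_of_associated_taylor (by simpa using hN)
    (finSuccEquiv_shift2 (K := K) N q ▸ h.map (finSuccEquiv K 1))
  set s := (finSuccEquiv K 1 q).eval 0
  have : (Polynomial.aeval (X 1 : MvPolynomial (Fin 2) K)).comp
      (aeval fun _ => Polynomial.X) = (finSuccEquiv K 1).symm.toAlgHom.comp
        (Polynomial.CAlgHom (R := K)) := by
    refine algHom_ext fun i => ?_
    simp [Subsingleton.elim i 0, AlgEquiv.eq_symm_apply, finSuccEquiv_X_one]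
  refine ⟨aeval (fun _ => Polynomial.X) s, ?_⟩
  rw [← (finSuccEquiv K 1).symm_apply_apply q, hconst]
  simpa using (DFunLike.congr_fun this s).symm

theorem exists_eq_aeval_of_associated_shift2 {q : MvPolynomial (Fin 2) K} {N M : ℤ}
    (hN : N ≠ 0) (h : Associated (shift2 K N M q) q) :
    ∃ g : Polynomial K, q = Polynomial.aeval ((M : K) • X 0 - (N : K) • X 1) g := by
  have hN' : (N : K) ≠ 0 := Int.cast_ne_zero.2 hN
  -- `ψ : x ↦ (M t - x) / N` conjugates `σ_t^N σ_x^M` to `σ_t^N`; `φ : x ↦ M t - N x` undoes it.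
  let ψ : MvPolynomial (Fin 2) K →ₐ[K] MvPolynomial (Fin 2) K :=
    aeval ![X 0, ((M : K) / N) • X 0 - (N : K)⁻¹ • X 1]
  let φ : MvPolynomial (Fin 2) K →ₐ[K] MvPolynomial (Fin 2) K :=
    aeval ![X 0, (M : K) • X 0 - (N : K) • X 1]
  have hφψ : φ.comp ψ = AlgHom.id K _ := by
    refine algHom_ext fun i => ?_
    fin_cases i
    · simp [φ, ψ]
    · simp [φ, ψ]
      rw [smul_sub, smul_smul, smul_smul, inv_mul_cancel₀ hN', one_smul, div_eq_inv_mul,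
        sub_sub_cancel]
  have hψσ : ψ.comp (shift2 K N M) = (shift2 K N 0).comp ψ := by
    refine algHom_ext fun i => ?_
    fin_cases i
    · simp [ψ, shift2]
    · have : ((M : K) / N) • (N : MvPolynomial (Fin 2) K) = M := by
        rw [Algebra.smul_def, algebraMap_eq, ← map_intCast (C : K →+* MvPolynomial (Fin 2) K),
          ← C_mul, div_mul_cancel₀ _ hN', map_intCast]
      simp [ψ, shift2, this]
      abel
  have hassoc := h.map ψ
  rw [← AlgHom.comp_apply ψ (shift2 K N M), hψσ, AlgHom.comp_apply] at hassoc
  obtain ⟨g, hg⟩ := exists_eq_aeval_X_one_of_associated_shift2 hN hassoc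
  refine ⟨g, ?_⟩
  rw [← AlgHom.id_apply (R := K) q, ← hφψ, AlgHom.comp_apply, hg,
    ← Polynomial.aeval_algHom_apply φ]
  simp [φ]

end Shift

/-- If every irreducible factor `q` of a nonzero `p ∈ K[t,x]` satisfies
`σ_t^n σ_x^m (q) ∣ p` for some `m ∈ ℤ` and `n > 0`, then `p` is integer-linear. -/
theorem integer_linear_of_shift_orbits (K : Type*) [Field K] [CharZero K]
    (p : MvPolynomial (Fin 2) K) (hp : p ≠ 0)
    (H : ∀ q : MvPolynomial (Fin 2) K, Irreducible q → q ∣ p →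
      ∃ (m n : ℤ), 0 < n ∧ shift2 K n m q ∣ p) :
    IsIntegerLinear p := by
  intro q hq hqp
  obtain ⟨N, M, hN, hassoc⟩ := exists_associated_shift2_self hp hq hqp H
  obtain ⟨g, rfl⟩ := exists_eq_aeval_of_associated_shift2 hN.ne' hassoc
  exact ⟨g, M, -N, by rw [Int.cast_neg, neg_smul, sub_eq_add_neg]⟩
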